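/- arXiv:1111.5484 — 2 statements merged into one kernel-verified Lean document; each statement's English description precedes it below -/
import Mathlib

section
/- Let k ≥ 3, let 1 ≤ m ≤ k−2, set n(k,m) = 2^k − 3·2^{k−m−2}, and let d denote the minimum distance of S_{n,k}. (a) If n is an integer with 2^k − 2^{k−m} ≤ n ≤ n(k,m), then d = 2^{k−1} − 2^{k−m−1}. (b) If n is an integer with n(k,m) ≤ n ≤ 2^k − 2^{k−m−1}, then n − d = 2^{k−1} − 2^{k−m−2}. -/
open Finset

/-- The value of column `j` (0-indexed) of the matrix
`H_k = [H_k^(k-1) | H_k^(k-2) | … | H_k^(0)]`, read as a `k`-bit integer with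
row 1 as the most significant bit.  (Column `c` of the block `H_k^(m)` is the
vector `(0,…,0,1,binary_m(c))`, i.e. the integer `2^m + c`; the block `H_k^(m)`
occupies global columns `[2^k - 2^(m+1), 2^k - 2^m)`, so that
`m = ⌊log₂ (2^k - 1 - j)⌋` and the value is `3·2^m + j - 2^k`.) -/
def colVal (k j : ℕ) : ℕ := 3 * 2 ^ Nat.log2 (2 ^ k - 1 - j) + j - 2 ^ k

/-- Row `i` (1-indexed, `1 ≤ i ≤ k`) of the matrix `H_k(n)` consisting of the
first `n` columns of `H_k`. -/
def Hrow (k n : ℕ) (i : ℕ) : Fin n → ZMod 2 :=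
  fun j => if Nat.testBit (colVal k j) (k - i) then 1 else 0

/-- The code `S_{n,k}`: the binary linear code spanned by the rows of `H_k(n)`. -/
def SCode (k n : ℕ) : Submodule (ZMod 2) (Fin n → ZMod 2) :=
  Submodule.span (ZMod 2) (Set.range fun i : Fin k => Hrow k n ((i : ℕ) + 1))

/-- `w_i`: the Hamming weight of the `i`-th (1-indexed) row of `H_k(n)`. -/
def rowWt (k n i : ℕ) : ℕ := hammingNorm (Hrow k n i)

/-- `α_i`: the `i`-th entry (1-indexed) of the last (`n`-th) column of `H_k(n)`;
`true` encodes `1` and `false` encodes `0`. -/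
def alphaBit (k n i : ℕ) : Bool := Nat.testBit (colVal k (n - 1)) (k - i)

/-- Row `i` (1-indexed) of the matrix `M_{n,k}`, whose `j`-th column
(0-indexed) is the `k`-bit binary representation of `2^k - 1 - j`, MSB first. -/
def Mrow (k n : ℕ) (i : ℕ) : Fin n → ZMod 2 :=
  fun j => if Nat.testBit (2 ^ k - 1 - (j : ℕ)) (k - i) then 1 else 0

/-- The code `D_{n,k}`: the binary linear code spanned by the rows of `M_{n,k}`. -/
def DCode (k n : ℕ) : Submodule (ZMod 2) (Fin n → ZMod 2) :=
  Submodule.span (ZMod 2) (Set.range fun i : Fin k => Mrow k n ((i : ℕ) + 1))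

/-- The value of column `j` (0-indexed) of the generalized matrix consisting of
`t-1` copies of `H_k^(k-1)` followed by `H_k(n')`, where `n = 2^(k-1)·(t-1) + n'`
with `2^(k-1) ≤ n' ≤ 2^k - 1` (so `t - 1 = (n - 2^(k-1)) / 2^(k-1)`). -/
def gcolVal (k n j : ℕ) : ℕ :=
  if j < (n - 2 ^ (k - 1)) / 2 ^ (k - 1) * 2 ^ (k - 1) then
    2 ^ (k - 1) + j % 2 ^ (k - 1)
  else colVal k (j - (n - 2 ^ (k - 1)) / 2 ^ (k - 1) * 2 ^ (k - 1))

/-- The generalized code `S_{n,k}`, defined for every `n ≥ 2^(k-1)`: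
the span of the rows of the `k × n` matrix obtained by concatenating `t-1`
copies of `H_k^(k-1)` followed by `H_k(n')`. -/
def GSCode (k n : ℕ) : Submodule (ZMod 2) (Fin n → ZMod 2) :=
  Submodule.span (ZMod 2)
    (Set.range fun i : Fin k => fun j : Fin n =>
      if Nat.testBit (gcolVal k n (j : ℕ)) (k - ((i : ℕ) + 1)) then (1 : ZMod 2) else 0)

/-- The minimum distance of a binary linear code: the least Hamming weight of a
nonzero codeword. -/
noncomputable def minDist {n : ℕ} (C : Submodule (ZMod 2) (Fin n → ZMod 2)) : ℕ :=
  sInf {w | ∃ c ∈ C, c ≠ 0 ∧ hammingNorm c = w}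

/-- `A_w`: the number of codewords of `C` of Hamming weight `w`. -/
noncomputable def numWt {n : ℕ} (C : Submodule (ZMod 2) (Fin n → ZMod 2)) (w : ℕ) : ℕ :=
  Set.ncard {c : Fin n → ZMod 2 | c ∈ C ∧ hammingNorm c = w}

/-- The undetected error probability
`P_ue(C,p) = Σ_{w=1}^n A_w p^w (1-p)^(n-w)`. -/
noncomputable def Pue {n : ℕ} (C : Submodule (ZMod 2) (Fin n → ZMod 2)) (p : ℝ) : ℝ :=
  ∑ w ∈ Finset.Icc 1 n, (numWt C w : ℝ) * p ^ w * (1 - p) ^ (n - w)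

/-- A code is proper if `p ↦ P_ue(C,p)` is monotonically increasing on `[0, 1/2]`. -/
def IsProper {n : ℕ} (C : Submodule (ZMod 2) (Fin n → ZMod 2)) : Prop :=
  MonotoneOn (Pue C) (Set.Icc (0 : ℝ) (1 / 2))

/-- An `[n,k]` code is satisfactory if `P_ue(C,p) ≤ 2^(k-n)` for all `p ∈ [0,1/2]`. -/
def IsSatisfactory (k : ℕ) {n : ℕ} (C : Submodule (ZMod 2) (Fin n → ZMod 2)) : Prop :=
  ∀ p ∈ Set.Icc (0 : ℝ) (1 / 2), Pue C p ≤ (2 : ℝ) ^ ((k : ℤ) - (n : ℤ))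

/-- The binary entropy function `h(x) = -x log₂ x - (1-x) log₂ (1-x)`. -/
noncomputable def binEnt (x : ℝ) : ℝ :=
  -(x * Real.logb 2 x) - (1 - x) * Real.logb 2 (1 - x)

/-- `U_m = (2^(m+2) - 3)·(1 - h((2^(m+1) - 2)/(2^(m+2) - 3)))`. -/
noncomputable def Ufun (m : ℕ) : ℝ :=
  ((2 : ℝ) ^ (m + 2) - 3) * (1 - binEnt (((2 : ℝ) ^ (m + 1) - 2) / ((2 : ℝ) ^ (m + 2) - 3)))

/-! A codeword of `S_{n,k}` is `j ↦ ⟨g, column j⟩` for some `g ∈ 𝔽₂^k`. Read as integers, the first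
`n = 2^k - 2^(s+2) + r` columns of `H_k` (`r ≤ 2^(s+1)`) are exactly the integers in
`[2^(s+2), 2^k) ∪ [2^(s+1), 2^(s+1) + r)`. Flipping a bit that `g` sees shows that for `g ≠ 0` the
form `v ↦ ⟨g, bits v⟩` is `1` on exactly half of `[0, 2^k)`, and on at most half of any `[0, 2^t)`.
Counting ones, the weight is therefore `2^(k-1) - #[0, 2^(s+2)) + #[2^(s+1), 2^(s+1) + r)`, at least
`2^(k-1) - 2^(s+1) + max(0, r - 2^s)`, and the row of `H_k` reading bit `s` attains this bound. -/

section dotBits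

variable {k : ℕ} (g : Fin k → ZMod 2)

def dotBits (v : ℕ) : ZMod 2 := ∑ b, g b * if v.testBit b then 1 else 0

lemma dotBits_xor_two_pow (b : Fin k) (v : ℕ) :
    dotBits g (v ^^^ 2 ^ (b : ℕ)) = dotBits g v + g b := by
  have hbit : ∀ b' : Fin k, (if (v ^^^ 2 ^ (b : ℕ)).testBit b' then (1 : ZMod 2) else 0) =
      (if v.testBit b' then 1 else 0) + if b' = b then 1 else 0 := by
    intro b'
    by_cases h : b' = b
    · subst h
      cases hv : v.testBit b' <;> simp [Nat.testBit_xor, hv]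
      decide
    · have : (b : ℕ) ≠ b' := fun e => h (Fin.ext e.symm)
      simp [Nat.testBit_xor, this, h]
  simp only [dotBits, hbit, mul_add, mul_ite, mul_one, mul_zero, sum_add_distrib, sum_ite_eq',
    mem_univ, if_true]

lemma dotBits_eq_zero_of_lt_two_pow {s v : ℕ} (hg : ∀ b : Fin k, (b : ℕ) < s → g b = 0)
    (hv : v < 2 ^ s) : dotBits g v = 0 :=
  sum_eq_zero fun b _ => by
    rcases lt_or_ge (b : ℕ) s with h | h
    · simp [hg b h]
    · simp [Nat.testBit_lt_two_pow (hv.trans_le (Nat.pow_le_pow_right two_pos h))]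

lemma two_mul_card_dotBits_ne_zero_range {s : ℕ} {b : Fin k} (hb : (b : ℕ) < s) (hgb : g b = 1) :
    2 * #{v ∈ range (2 ^ s) | dotBits g v ≠ 0} = 2 ^ s := by
  have hflip : ∀ v, dotBits g (v ^^^ 2 ^ (b : ℕ)) = 0 ↔ dotBits g v ≠ 0 := by
    intro v
    rw [dotBits_xor_two_pow, hgb]
    generalize dotBits g v = x
    revert x; decide
  have hxor : ∀ v < 2 ^ s, v ^^^ 2 ^ (b : ℕ) < 2 ^ s := fun v hv =>
    Nat.xor_lt_two_pow hv (Nat.pow_lt_pow_right (by norm_num) hb)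
  have hswap : #{v ∈ range (2 ^ s) | dotBits g v ≠ 0} = #{v ∈ range (2 ^ s) | ¬ dotBits g v ≠ 0} := by
    apply card_nbij' (· ^^^ 2 ^ (b : ℕ)) (· ^^^ 2 ^ (b : ℕ))
    · intro v hv
      simp only [mem_coe, mem_filter, mem_range] at hv ⊢
      exact ⟨hxor v hv.1, not_not.2 ((hflip v).2 hv.2)⟩
    · intro v hv
      simp only [mem_coe, mem_filter, mem_range] at hv ⊢
      exact ⟨hxor v hv.1, fun h => hv.2 ((hflip v).1 h)⟩
    · intro v _; simp
    · intro v _; simp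
  have htotal := card_filter_add_card_filter_not (s := range (2 ^ s)) (fun v => dotBits g v ≠ 0)
  rw [card_range] at htotal
  omega

lemma two_mul_card_dotBits_ne_zero_range_le (s : ℕ) :
    2 * #{v ∈ range (2 ^ s) | dotBits g v ≠ 0} ≤ 2 ^ s := by
  by_cases h : ∃ b : Fin k, (b : ℕ) < s ∧ g b ≠ 0
  · obtain ⟨b, hb, hgb⟩ := h
    rw [two_mul_card_dotBits_ne_zero_range g hb (Fin.eq_one_of_ne_zero _ hgb)]
  · push Not at h
    rw [filter_false_of_mem fun v hv => not_not.2 (dotBits_eq_zero_of_lt_two_pow g h (mem_range.1 hv))]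
    simp

end dotBits

lemma card_filter_Ico_add_card_filter_Ico (p : ℕ → Prop) [DecidablePred p] {a b c : ℕ}
    (hab : a ≤ b) (hbc : b ≤ c) :
    #{x ∈ Ico a b | p x} + #{x ∈ Ico b c | p x} = #{x ∈ Ico a c | p x} := by
  simp only [card_filter]
  exact sum_Ico_consecutive _ hab hbc

lemma card_filter_Ico_comp_of_shift (p : ℕ → Prop) [DecidablePred p] {f : ℕ → ℕ} {a b l : ℕ}
    (hf : ∀ c < l, f (a + c) = b + c) :
    #{j ∈ Ico a (a + l) | p (f j)} = #{v ∈ Ico b (b + l) | p v} := by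
  apply card_nbij' (fun j => j - a + b) (fun v => v - b + a)
  · intro j hj
    simp only [mem_coe, mem_filter, mem_Ico] at hj ⊢
    have := hf (j - a) (by omega)
    rw [Nat.add_sub_cancel' hj.1.1] at this
    exact ⟨by omega, by rw [add_comm, ← this]; exact hj.2⟩
  · intro v hv
    simp only [mem_coe, mem_filter, mem_Ico] at hv ⊢
    have := hf (v - b) (by omega)
    rw [Nat.add_sub_cancel' hv.1.1] at this
    exact ⟨by omega, by rw [add_comm, this]; exact hv.2⟩
  · intro j hj
    simp only [mem_coe, mem_filter, mem_Ico] at hj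
    dsimp only
    omega
  · intro v hv
    simp only [mem_coe, mem_filter, mem_Ico] at hv
    dsimp only
    omega

lemma colVal_block {k m c : ℕ} (hm : m < k) (hc : c < 2 ^ m) :
    colVal k (2 ^ k - 2 ^ (m + 1) + c) = 2 ^ m + c := by
  have h1 : 2 ^ (m + 1) ≤ 2 ^ k := Nat.pow_le_pow_right two_pos hm
  have h2 : 2 ^ (m + 1) = 2 * 2 ^ m := pow_succ' 2 m
  have hlog : Nat.log2 (2 ^ k - 1 - (2 ^ k - 2 ^ (m + 1) + c)) = m := by
    rw [Nat.log2_eq_log_two]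
    exact Nat.log_eq_of_pow_le_of_lt_pow (by omega) (by omega)
  rw [colVal, hlog]
  omega

lemma card_filter_colVal_range_sub_two_pow (p : ℕ → Prop) [DecidablePred p] {k s : ℕ}
    (hs : s ≤ k) :
    #{j ∈ range (2 ^ k - 2 ^ s) | p (colVal k j)} = #{v ∈ Ico (2 ^ s) (2 ^ k) | p v} := by
  induction hs using Nat.decreasingInduction with
  | self => simp
  | of_succ s hsk ih =>
    have h1 : 2 ^ (s + 1) ≤ 2 ^ k := Nat.pow_le_pow_right two_pos hsk
    have h2 : 2 ^ (s + 1) = 2 * 2 ^ s := pow_succ' 2 s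
    have hblock : #{j ∈ Ico (2 ^ k - 2 ^ (s + 1)) (2 ^ k - 2 ^ s) | p (colVal k j)}
        = #{v ∈ Ico (2 ^ s) (2 ^ (s + 1)) | p v} := by
      have := card_filter_Ico_comp_of_shift p (a := 2 ^ k - 2 ^ (s + 1)) (b := 2 ^ s) (l := 2 ^ s)
        fun c hc => colVal_block hsk hc
      rwa [show 2 ^ k - 2 ^ (s + 1) + 2 ^ s = 2 ^ k - 2 ^ s by omega,
        show 2 ^ s + 2 ^ s = 2 ^ (s + 1) by omega] at this
    have hcols := card_filter_Ico_add_card_filter_Ico (fun j => p (colVal k j))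
      (Nat.zero_le (2 ^ k - 2 ^ (s + 1))) (show 2 ^ k - 2 ^ (s + 1) ≤ 2 ^ k - 2 ^ s by omega)
    have hvals := card_filter_Ico_add_card_filter_Ico p (show 2 ^ s ≤ 2 ^ (s + 1) by omega) h1
    rw [range_eq_Ico] at ih ⊢
    omega

lemma card_filter_colVal_range (p : ℕ → Prop) [DecidablePred p] {k t r : ℕ} (ht : t < k)
    (hr : r ≤ 2 ^ t) :
    #{j ∈ range (2 ^ k - 2 ^ (t + 1) + r) | p (colVal k j)} =
      #{v ∈ Ico (2 ^ (t + 1)) (2 ^ k) | p v} + #{v ∈ Ico (2 ^ t) (2 ^ t + r) | p v} := by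
  rw [range_eq_Ico, ← card_filter_Ico_add_card_filter_Ico _ (Nat.zero_le _) (Nat.le_add_right _ r),
    ← range_eq_Ico, card_filter_colVal_range_sub_two_pow p ht,
    card_filter_Ico_comp_of_shift p fun c hc => colVal_block ht (hc.trans_le hr)]

lemma hammingNorm_eq_card_range {n : ℕ} (f : ℕ → ZMod 2) :
    hammingNorm (fun j : Fin n => f j) = #{j ∈ range n | f j ≠ 0} := by
  simp only [hammingNorm, card_filter]
  exact Fin.sum_univ_eq_sum_range (fun j => if f j ≠ 0 then 1 else 0) n

lemma sum_smul_Hrow {k n : ℕ} (f : Fin k → ZMod 2) :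
    ∑ i, f i • Hrow k n (i + 1) = fun j : Fin n => dotBits (f ∘ Fin.rev) (colVal k j) := by
  funext j
  simp only [Finset.sum_apply, Pi.smul_apply, smul_eq_mul, Hrow, dotBits]
  exact Fintype.sum_equiv Fin.revPerm _ _ fun i => by simp [Fin.val_rev]

lemma mem_SCode_iff {k n : ℕ} {c : Fin n → ZMod 2} :
    c ∈ SCode k n ↔ ∃ g : Fin k → ZMod 2, c = fun j : Fin n => dotBits g (colVal k j) := by
  rw [SCode, Submodule.mem_span_range_iff_exists_fun]
  constructor
  · rintro ⟨f, rfl⟩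
    exact ⟨f ∘ Fin.rev, sum_smul_Hrow f⟩
  · rintro ⟨g, rfl⟩
    refine ⟨g ∘ Fin.rev, ?_⟩
    rw [sum_smul_Hrow]
    simp [Function.comp_def]

lemma minDist_eq_of_forall_le {n d : ℕ} {C : Submodule (ZMod 2) (Fin n → ZMod 2)}
    (hd : ∃ c ∈ C, c ≠ 0 ∧ hammingNorm c = d) (hle : ∀ c ∈ C, c ≠ 0 → d ≤ hammingNorm c) :
    minDist C = d :=
  le_antisymm (Nat.sInf_le hd) (le_csInf ⟨d, hd⟩ fun _ ⟨c, hc, hc0, hw⟩ => hw ▸ hle c hc hc0)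

lemma le_card_dotBits_ne_zero {k s r : ℕ} (hk : s + 2 ≤ k) (hr : r ≤ 2 ^ (s + 1))
    {g : Fin k → ZMod 2} (hg : g ≠ 0) :
    2 ^ (k - 1) - 2 ^ (s + 1) + (r - 2 ^ s) ≤
      #{v ∈ Ico (2 ^ (s + 2)) (2 ^ k) | dotBits g v ≠ 0} +
        #{v ∈ Ico (2 ^ (s + 1)) (2 ^ (s + 1) + r) | dotBits g v ≠ 0} := by
  obtain ⟨b, hb⟩ := Function.ne_iff.1 hg
  have hk' := Nat.two_pow_pred_mul_two (show 0 < k by omega)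
  have hs2 : 2 ^ (s + 2) = 2 ^ (s + 1) * 2 := pow_succ 2 (s + 1)
  have hs1 := pow_succ 2 s
  have hsk : 2 ^ (s + 2) ≤ 2 ^ k := Nat.pow_le_pow_right two_pos hk
  have hall := two_mul_card_dotBits_ne_zero_range g b.isLt (Fin.eq_one_of_ne_zero _ hb)
  have hlow := two_mul_card_dotBits_ne_zero_range_le g (s + 2)
  have hlow' := two_mul_card_dotBits_ne_zero_range_le g (s + 1)
  have hsplit := card_filter_Ico_add_card_filter_Ico (fun v => dotBits g v ≠ 0) (Nat.zero_le _) hsk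
  have hsplit' := card_filter_Ico_add_card_filter_Ico (fun v => dotBits g v ≠ 0) (Nat.zero_le _)
    (Nat.pow_le_pow_right two_pos (by omega) : 2 ^ (s + 1) ≤ 2 ^ (s + 2))
  have hsplit'' := card_filter_Ico_add_card_filter_Ico (fun v => dotBits g v ≠ 0)
    (Nat.le_add_right (2 ^ (s + 1)) r) (show 2 ^ (s + 1) + r ≤ 2 ^ (s + 2) by omega)
  have hrest := card_filter_le (Ico (2 ^ (s + 1) + r) (2 ^ (s + 2))) (fun v => dotBits g v ≠ 0)
  rw [Nat.card_Ico] at hrest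
  simp only [range_eq_Ico] at hall hlow hlow'
  -- Two bounds, combined by `omega`: dropping the partial block leaves `2^(k-1) - 2^(s+1)`, and
  -- the partial block misses at most `2^(s+2) - (2^(s+1) + r)` ones of `[2^(s+1), 2^(s+2))`.
  omega

lemma testBit_iff_two_pow_le {w i : ℕ} (hw : w < 2 ^ (i + 1)) : w.testBit i = true ↔ 2 ^ i ≤ w :=
  ⟨Nat.ge_two_pow_of_testBit, fun h => Nat.testBit_of_two_pow_le_and_two_pow_add_one_gt h hw⟩

lemma dotBits_single {k : ℕ} (b : Fin k) (v : ℕ) :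
    dotBits (Pi.single b 1) v = if v.testBit b then 1 else 0 := by
  rw [dotBits, Fintype.sum_eq_single b fun x hx => by simp [hx]]
  simp

lemma card_dotBits_single_ne_zero {k r : ℕ} (b : Fin k) (hk : (b : ℕ) + 2 ≤ k)
    (hr : r ≤ 2 ^ ((b : ℕ) + 1)) :
    #{v ∈ Ico (2 ^ ((b : ℕ) + 2)) (2 ^ k) | dotBits (Pi.single b 1) v ≠ 0} +
        #{v ∈ Ico (2 ^ ((b : ℕ) + 1)) (2 ^ ((b : ℕ) + 1) + r) | dotBits (Pi.single b 1) v ≠ 0} =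
      2 ^ (k - 1) - 2 ^ ((b : ℕ) + 1) + (r - 2 ^ (b : ℕ)) := by
  have hk' := Nat.two_pow_pred_mul_two (show 0 < k by omega)
  have hb2 : 2 ^ ((b : ℕ) + 2) = 2 ^ ((b : ℕ) + 1) * 2 := pow_succ 2 ((b : ℕ) + 1)
  have hb1 := pow_succ 2 (b : ℕ)
  have hsk : 2 ^ ((b : ℕ) + 2) ≤ 2 ^ k := Nat.pow_le_pow_right two_pos hk
  have hall := two_mul_card_dotBits_ne_zero_range (Pi.single b 1) b.isLt (Pi.single_eq_same b 1)
  have hlow := two_mul_card_dotBits_ne_zero_range (s := (b : ℕ) + 2) (Pi.single b 1)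
    (by omega) (Pi.single_eq_same b 1)
  have hsplit := card_filter_Ico_add_card_filter_Ico (fun v => dotBits (Pi.single b 1) v ≠ 0)
    (Nat.zero_le _) hsk
  have hpartial : {v ∈ Ico (2 ^ ((b : ℕ) + 1)) (2 ^ ((b : ℕ) + 1) + r) |
      dotBits (Pi.single b 1) v ≠ 0} = Ico (2 ^ ((b : ℕ) + 1) + 2 ^ (b : ℕ)) (2 ^ ((b : ℕ) + 1) + r) := by
    have hbit : ∀ v, 2 ^ ((b : ℕ) + 1) ≤ v → v < 2 ^ ((b : ℕ) + 1) + r →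
        (v.testBit b = true ↔ 2 ^ ((b : ℕ) + 1) + 2 ^ (b : ℕ) ≤ v) := by
      intro v hv hv'
      obtain ⟨w, rfl⟩ := Nat.exists_eq_add_of_le hv
      rw [Nat.testBit_two_pow_add_gt (Nat.lt_succ_self _), testBit_iff_two_pow_le (by omega)]
      omega
    ext v
    simp only [mem_filter, mem_Ico, dotBits_single, ne_eq, ite_eq_right_iff, one_ne_zero,
      imp_false, not_not]
    constructor
    · rintro ⟨⟨hv, hv'⟩, hvb⟩
      exact ⟨(hbit v hv hv').1 hvb, hv'⟩
    · rintro ⟨hv, hv'⟩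
      exact ⟨⟨by omega, hv'⟩, (hbit v (by omega) hv').2 hv⟩
  simp only [range_eq_Ico] at hall hlow
  rw [hpartial, Nat.card_Ico]
  omega

lemma hammingNorm_dotBits_colVal {k s r : ℕ} (hk : s + 1 < k) (hr : r ≤ 2 ^ (s + 1))
    (g : Fin k → ZMod 2) :
    hammingNorm (fun j : Fin (2 ^ k - 2 ^ (s + 2) + r) => dotBits g (colVal k j)) =
      #{v ∈ Ico (2 ^ (s + 2)) (2 ^ k) | dotBits g v ≠ 0} +
        #{v ∈ Ico (2 ^ (s + 1)) (2 ^ (s + 1) + r) | dotBits g v ≠ 0} :=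
  (hammingNorm_eq_card_range _).trans (card_filter_colVal_range (fun v => dotBits g v ≠ 0) hk hr)

theorem minDist_SCode {k s r : ℕ} (hk : s + 3 ≤ k) (hr : r ≤ 2 ^ (s + 1)) :
    minDist (SCode k (2 ^ k - 2 ^ (s + 2) + r)) = 2 ^ (k - 1) - 2 ^ (s + 1) + (r - 2 ^ s) := by
  have hweight := hammingNorm_dotBits_colVal (show s + 1 < k by omega) hr
  apply minDist_eq_of_forall_le
  · have hwit := card_dotBits_single_ne_zero (⟨s, by omega⟩ : Fin k) (show s + 2 ≤ k by omega) hr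
    have hpos : 0 < 2 ^ (k - 1) - 2 ^ (s + 1) + (r - 2 ^ s) := by
      have := Nat.pow_lt_pow_right (a := 2) one_lt_two (show s + 1 < k - 1 by omega)
      omega
    refine ⟨_, mem_SCode_iff.2 ⟨Pi.single ⟨s, by omega⟩ 1, rfl⟩, ?_, ?_⟩
    · rw [← hammingNorm_pos_iff, hweight, hwit]
      exact hpos
    · rw [hweight, hwit]
  · rintro _ hc hc0
    obtain ⟨g, rfl⟩ := mem_SCode_iff.1 hc
    rw [hweight]
    exact le_card_dotBits_ne_zero (by omega) hr
      (by rintro rfl; exact hc0 (funext fun j => by simp [dotBits]))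

theorem stmt5_general (k m : ℕ) (hm1 : 1 ≤ m) (hm2 : m ≤ k - 2) :
    (∀ n : ℕ, 2 ^ k - 2 ^ (k - m) ≤ n → n ≤ 2 ^ k - 3 * 2 ^ (k - m - 2) →
      minDist (SCode k n) = 2 ^ (k - 1) - 2 ^ (k - m - 1)) ∧
    (∀ n : ℕ, 2 ^ k - 3 * 2 ^ (k - m - 2) ≤ n → n ≤ 2 ^ k - 2 ^ (k - m - 1) →
      n - minDist (SCode k n) = 2 ^ (k - 1) - 2 ^ (k - m - 2)) := by
  obtain ⟨s, hs⟩ : ∃ s, k - m = s + 2 := ⟨k - m - 2, by omega⟩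
  rw [show k - m - 1 = s + 1 by omega, show k - m - 2 = s by omega, hs]
  have hk' := Nat.two_pow_pred_mul_two (show 0 < k by omega)
  have hs2 : 2 ^ (s + 2) = 2 ^ (s + 1) * 2 := pow_succ 2 (s + 1)
  have hs1 := pow_succ 2 s
  have hsk : 2 ^ (s + 2) ≤ 2 ^ (k - 1) := Nat.pow_le_pow_right two_pos (by omega)
  have hd : ∀ n, 2 ^ k - 2 ^ (s + 2) ≤ n → n ≤ 2 ^ k - 2 ^ (s + 1) →
      minDist (SCode k n) = 2 ^ (k - 1) - 2 ^ (s + 1) + (n - (2 ^ k - 2 ^ (s + 2)) - 2 ^ s) := by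
    intro n hn hn'
    obtain ⟨r, rfl⟩ : ∃ r, n = 2 ^ k - 2 ^ (s + 2) + r := ⟨n - (2 ^ k - 2 ^ (s + 2)), by omega⟩
    rw [minDist_SCode (by omega) (by omega)]
    omega
  constructor
  · intro n hn hn'
    rw [hd n hn (by omega)]
    omega
  · intro n hn hn'
    rw [hd n (by omega) hn']
    omega

/-- The minimum distance of `S_{n,k}` on the two halves of the
interval `[2^k - 2^(k-m), 2^k - 2^(k-m-1)]`, with midpoint
`n(k,m) = 2^k - 3·2^(k-m-2)`. -/
theorem stmt5 (k m : ℕ) (hk : 3 ≤ k) (hm1 : 1 ≤ m) (hm2 : m ≤ k - 2) :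
    (∀ n : ℕ, 2 ^ k - 2 ^ (k - m) ≤ n → n ≤ 2 ^ k - 3 * 2 ^ (k - m - 2) →
      minDist (SCode k n) = 2 ^ (k - 1) - 2 ^ (k - m - 1)) ∧
    (∀ n : ℕ, 2 ^ k - 3 * 2 ^ (k - m - 2) ≤ n → n ≤ 2 ^ k - 2 ^ (k - m - 1) →
      n - minDist (SCode k n) = 2 ^ (k - 1) - 2 ^ (k - m - 2)) :=
  stmt5_general k m hm1 hm2
end

section
/- Let k ≥ 4. (a) If m is an integer with 1 ≤ m ≤ k−1 and m ≥ ⌈(k−3)/2⌉, then S_{n,k} is proper for every integer n with 2^k − 2^{k−m} ≤ n ≤ 2^k − 2^{k−m−1}. (b) S_{n,k} is proper for every integer n with 2^k − 2^{k−⌈(k−3)/2⌉} ≤ n ≤ 2^k − 1. -/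
open Finset

/-!
Index the codewords of `S_{n,k}` by `X < 2 ^ k`: the codeword of `X` has entry `⟨X, c_j⟩` in
column `j`, where `c_j` is that column of `H_k` read as a number. For
`n = 2 ^ k - 2 ^ N + u` with `u ≤ 2 ^ (N - 1)`, the first `2 ^ k - 2 ^ N` columns run through every
`c ∈ [2 ^ N, 2 ^ k)` once and the last `u` through `2 ^ (N - 1) + s`, `s < u`, so weights are
computed by counting the `c` with `⟨X, c⟩ = 1`. If the lowest set bit of `X ≠ 0` is at position
`≥ N - 1`, the weight `w` satisfies `n ≤ 2 w`. Otherwise flipping bit `N - 1` of `X` swaps ones and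
zeros in the last `u` columns: the two weights add up to `n` and differ by at most `2 ^ (N - 2)`.

Hence the derivative of `P_ue(p) = ∑_{X ≠ 0} p ^ w (1 - p) ^ (n - w)` is nonnegative on
`(0, 1/2)`: a term with `n ≤ 2 w` is increasing there, and a pair of terms with `w + w' = n` and
`(w - w')² ≤ n` has nonnegative derivative. The hypothesis `2 N ≤ k + 3` is exactly what gives
`2 ^ (2 (N - 2)) ≤ 2 ^ (k - 1) ≤ n`.
-/

namespace Nat

lemma count_congr {p q : ℕ → Prop} [DecidablePred p] [DecidablePred q] {n : ℕ}
    (h : ∀ k < n, (p k ↔ q k)) : Nat.count p n = Nat.count q n := by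
  simp only [Nat.count_eq_card_filter_range]
  exact congrArg card (filter_congr fun k hk => h k (mem_range.mp hk))

lemma count_add_count_not (p : ℕ → Prop) [DecidablePred p] (n : ℕ) :
    Nat.count p n + Nat.count (fun k => ¬p k) n = n := by
  induction n with
  | zero => simp
  | succ n ih => rw [Nat.count_succ, Nat.count_succ]; split_ifs <;> omega

end Nat

lemma Finset.sum_nonneg_of_involution {ι M : Type*} [AddCommGroup M] [LinearOrder M]
    [IsOrderedAddMonoid M] {s : Finset ι} {f : ι → M} (σ : ι → ι) (hσ : ∀ i ∈ s, σ i ∈ s)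
    (hσσ : ∀ i ∈ s, σ (σ i) = i) (h : ∀ i ∈ s, 0 ≤ f i + f (σ i)) : 0 ≤ ∑ i ∈ s, f i := by
  have hperm : ∑ i ∈ s, f (σ i) = ∑ i ∈ s, f i :=
    sum_nbij' σ σ hσ hσ hσσ hσσ fun _ _ => rfl
  have htwice : 0 ≤ ∑ i ∈ s, f i + ∑ i ∈ s, f i :=
    (sum_nonneg h).trans_eq (by rw [sum_add_distrib, hperm])
  by_contra! hneg
  exact htwice.not_gt (add_neg hneg hneg)

lemma exists_two_pow_pred_le_le {r L : ℕ} (hr : 1 ≤ r) (hL : 1 ≤ L) (hrL : r ≤ 2 ^ L) :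
    ∃ N, 1 ≤ N ∧ N ≤ L ∧ 2 ^ (N - 1) ≤ r ∧ r ≤ 2 ^ N := by
  induction L with
  | zero => omega
  | succ L ih =>
    by_cases h : 1 ≤ L ∧ r ≤ 2 ^ L
    · obtain ⟨N, hN⟩ := ih h.1 h.2
      exact ⟨N, hN.1, by omega, hN.2.2⟩
    · refine ⟨L + 1, by omega, le_rfl, ?_, hrL⟩
      rcases Nat.eq_zero_or_pos L with rfl | hL0
      · simpa using hr
      · simp only [Nat.add_sub_cancel]
        omega

section Analysis

noncomputable def weightTermDeriv (n w : ℕ) (p : ℝ) : ℝ :=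
  w * p ^ (w - 1) * (1 - p) ^ (n - w) - (n - w : ℕ) * p ^ w * (1 - p) ^ (n - w - 1)

lemma hasDerivAt_pow_mul_one_sub_pow (n w : ℕ) (p : ℝ) :
    HasDerivAt (fun q : ℝ => q ^ w * (1 - q) ^ (n - w)) (weightTermDeriv n w p) p := by
  have h := (hasDerivAt_pow w p).fun_mul (((hasDerivAt_id p).const_sub 1).fun_pow (n - w))
  exact h.congr_deriv (by simp only [weightTermDeriv, id]; ring)

lemma weightTermDeriv_eq {n w : ℕ} (hw : 1 ≤ w) (hwn : w < n) (p : ℝ) :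
    weightTermDeriv n w p = p ^ (w - 1) * (1 - p) ^ (n - w - 1) * (w - n * p) := by
  obtain ⟨m, rfl⟩ := Nat.exists_eq_add_of_le' hw
  obtain ⟨d, rfl⟩ := Nat.exists_eq_add_of_lt hwn
  simp only [weightTermDeriv, show m + 1 + d + 1 - (m + 1) = d + 1 by omega, Nat.add_sub_cancel]
  push_cast
  ring

lemma weightTermDeriv_nonneg {n w : ℕ} (hwn : w ≤ n) (hnw : n ≤ 2 * w) {p : ℝ} (hp0 : 0 ≤ p)
    (hp : p ≤ 1 / 2) : 0 ≤ weightTermDeriv n w p := by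
  rcases hwn.eq_or_lt with rfl | hwn
  · simpa [weightTermDeriv] using mul_nonneg (Nat.cast_nonneg w) (pow_nonneg hp0 (w - 1))
  rw [weightTermDeriv_eq (by omega) hwn]
  have hnw' : (n : ℝ) ≤ 2 * w := by exact_mod_cast hnw
  refine mul_nonneg (mul_nonneg (pow_nonneg hp0 _) (pow_nonneg (by linarith) _)) ?_
  nlinarith [Nat.cast_nonneg (α := ℝ) n]

lemma pow_sub_pow_mul_add_le {x y : ℝ} (hy : 0 ≤ y) (hyx : y ≤ x) (a : ℕ) :
    (x ^ a - y ^ a) * (x + y) ≤ a * (x - y) * (x ^ a + y ^ a) := by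
  have hpair : ∀ c ≤ a, x ^ c * y ^ (a - c) + x ^ (a - c) * y ^ c ≤ x ^ a + y ^ a := by
    intro c hc
    have h1 := pow_le_pow_left₀ hy hyx c
    have h2 := pow_le_pow_left₀ hy hyx (a - c)
    have hx : x ^ c * x ^ (a - c) = x ^ a := by rw [← pow_add, Nat.add_sub_cancel' hc]
    have hy' : y ^ c * y ^ (a - c) = y ^ a := by rw [← pow_add, Nat.add_sub_cancel' hc]
    nlinarith [mul_nonneg (sub_nonneg.mpr h1) (sub_nonneg.mpr h2)]
  have hsum : (∑ i ∈ range a, x ^ i * y ^ (a - 1 - i)) * (x + y) ≤ a * (x ^ a + y ^ a) := by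
    have hreflect := sum_range_reflect (fun i => x ^ i * y ^ (a - i)) a
    have hshift : ∀ i ∈ range a, x ^ i * y ^ (a - 1 - i) * (x + y) =
        x ^ (i + 1) * y ^ (a - (i + 1)) + x ^ i * y ^ (a - i) := fun i hi => by
      rw [show a - i = a - (i + 1) + 1 by have := mem_range.mp hi; omega,
        show a - 1 - i = a - (i + 1) by omega]
      ring
    calc (∑ i ∈ range a, x ^ i * y ^ (a - 1 - i)) * (x + y)
        = ∑ i ∈ range a, (x ^ (i + 1) * y ^ (a - (i + 1)) + x ^ (a - (i + 1)) * y ^ (i + 1)) := by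
          rw [sum_mul, sum_congr rfl hshift, sum_add_distrib, ← hreflect, ← sum_add_distrib]
          refine sum_congr rfl fun i hi => ?_
          rw [show a - (a - 1 - i) = i + 1 by have := mem_range.mp hi; omega,
            show a - 1 - i = a - (i + 1) by omega]
      _ ≤ ∑ _i ∈ range a, (x ^ a + y ^ a) := sum_le_sum fun i hi => hpair _ (mem_range.mp hi)
      _ = a * (x ^ a + y ^ a) := by rw [sum_const, card_range, nsmul_eq_mul]
  rw [← geom_sum₂_mul, mul_right_comm]
  calc (∑ i ∈ range a, x ^ i * y ^ (a - 1 - i)) * (x + y) * (x - y)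
      ≤ a * (x ^ a + y ^ a) * (x - y) := mul_le_mul_of_nonneg_right hsum (by linarith)
    _ = a * (x - y) * (x ^ a + y ^ a) := by ring

lemma weightTermDeriv_add_nonneg {n w w' : ℕ} (hw : 1 ≤ w) (hw' : 1 ≤ w') (hn : w + w' = n)
    (hsq : ((w : ℤ) - w') ^ 2 ≤ n) {p : ℝ} (hp0 : 0 ≤ p) (hp : p ≤ 1 / 2) :
    0 ≤ weightTermDeriv n w p + weightTermDeriv n w' p := by
  wlog hle : w ≤ w' generalizing w w'
  · rw [add_comm]
    have hsq' : ((w' : ℤ) - w) ^ 2 ≤ n := by linear_combination hsq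
    exact this hw' hw (by omega) hsq' (by omega)
  obtain ⟨a, rfl⟩ := Nat.exists_eq_add_of_le hle
  obtain ⟨m, rfl⟩ := Nat.exists_eq_add_of_le' hw
  subst hn
  rw [weightTermDeriv_eq hw (by omega), weightTermDeriv_eq hw' (by omega),
    show m + 1 + (m + 1 + a) - (m + 1) - 1 = m + a by omega,
    show m + 1 + (m + 1 + a) - (m + 1 + a) - 1 = m by omega,
    show m + 1 + a - 1 = m + a by omega, Nat.add_sub_cancel]
  set x := 1 - p
  have hyx : p ≤ x := by linarith
  have hgeom := pow_sub_pow_mul_add_le hp0 hyx a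
  rw [show x + p = 1 by ring, mul_one] at hgeom
  have ha : (a : ℝ) ^ 2 ≤ 2 * m + 2 + a := by
    have : (a : ℤ) ^ 2 ≤ 2 * m + 2 + a := by push_cast at hsq; linarith
    exact_mod_cast this
  have hS : 0 ≤ (x - p) * (x ^ a + p ^ a) :=
    mul_nonneg (by linarith) (add_nonneg (pow_nonneg (by linarith) a) (pow_nonneg hp0 a))
  -- Twice the bracket is `n (x - p) (xᵃ + pᵃ) - a (xᵃ - pᵃ)`, and
  -- `a (xᵃ - pᵃ) ≤ a² (x - p) (xᵃ + pᵃ) ≤ n (x - p) (xᵃ + pᵃ)`.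
  have hbracket : 0 ≤ x ^ a * (m + 1 - (2 * m + 2 + a) * p) +
      p ^ a * (m + 1 + a - (2 * m + 2 + a) * p) := by
    nlinarith [mul_le_mul_of_nonneg_left hgeom (Nat.cast_nonneg (α := ℝ) a),
      mul_le_mul_of_nonneg_right ha hS]
  have hx0 : 0 ≤ x := by linarith
  refine (mul_nonneg (mul_nonneg (pow_nonneg hp0 m) (pow_nonneg hx0 m)) hbracket).trans_eq ?_
  push_cast
  ring

lemma monotoneOn_sum_pow_mul_one_sub_pow {ι : Type*} (s : Finset ι) (n : ℕ) (w : ι → ℕ)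
    (h : ∀ p ∈ Set.Ioo (0 : ℝ) (1 / 2), 0 ≤ ∑ i ∈ s, weightTermDeriv n (w i) p) :
    MonotoneOn (fun p : ℝ => ∑ i ∈ s, p ^ w i * (1 - p) ^ (n - w i)) (Set.Icc 0 (1 / 2)) := by
  have hd : ∀ p : ℝ, HasDerivAt (fun q : ℝ => ∑ i ∈ s, q ^ w i * (1 - q) ^ (n - w i))
      (∑ i ∈ s, weightTermDeriv n (w i) p) p := fun p =>
    HasDerivAt.fun_sum fun i _ => hasDerivAt_pow_mul_one_sub_pow n (w i) p
  refine monotoneOn_of_deriv_nonneg (convex_Icc _ _)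
    (fun p _ => (hd p).continuousAt.continuousWithinAt)
    (fun p _ => (hd p).differentiableAt.differentiableWithinAt) fun p hp => ?_
  rw [interior_Icc] at hp
  rw [(hd p).deriv]
  exact h p hp

end Analysis

lemma Pue_eq_sum_of_bijOn {n : ℕ} {C : Submodule (ZMod 2) (Fin n → ZMod 2)} {ι : Type*}
    {s : Finset ι} {f : ι → Fin n → ZMod 2} (hf : Set.BijOn f s {c | c ∈ C ∧ c ≠ 0}) (p : ℝ) :
    Pue C p = ∑ i ∈ s, p ^ hammingNorm (f i) * (1 - p) ^ (n - hammingNorm (f i)) := by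
  classical
  have hnum : ∀ w ∈ Icc 1 n, numWt C w = #{i ∈ s | hammingNorm (f i) = w} := by
    intro w hw
    have himage : {c | c ∈ C ∧ hammingNorm c = w} =
        f '' ↑({i ∈ s | hammingNorm (f i) = w} : Finset ι) := by
      ext c
      constructor
      · rintro ⟨hc, rfl⟩
        have hc0 : c ≠ 0 := by
          rintro rfl
          simp at hw
        obtain ⟨i, hi, rfl⟩ := hf.surjOn ⟨hc, hc0⟩
        exact ⟨i, by simp [mem_coe.mp hi], rfl⟩
      · rintro ⟨i, hi, rfl⟩
        simp only [coe_filter, Set.mem_ofPred_eq] at hi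
        exact ⟨(hf.mapsTo hi.1).1, hi.2⟩
    rw [numWt, himage, (hf.injOn.mono (coe_subset.mpr (filter_subset _ _))).ncard_image,
      Set.ncard_coe_finset]
  have hmaps : ∀ i ∈ s, hammingNorm (f i) ∈ Icc 1 n := fun i hi =>
    mem_Icc.mpr ⟨hammingNorm_pos_iff.mpr (hf.mapsTo hi).2,
      hammingNorm_le_card_fintype.trans_eq (Fintype.card_fin n)⟩
  rw [Pue, ← sum_fiberwise_of_maps_to hmaps]
  refine sum_congr rfl fun w hw => ?_
  rw [hnum w hw, sum_congr rfl fun i hi => by rw [(mem_filter.mp hi).2], sum_const, nsmul_eq_mul]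
  ring

namespace SCode

section Bits

def bitVal (X i : ℕ) : ZMod 2 := if X.testBit i then 1 else 0

def bitDot (k X v : ℕ) : ZMod 2 := ∑ i ∈ range k, bitVal X i * bitVal v i

lemma bitVal_xor (X Y i : ℕ) : bitVal (X ^^^ Y) i = bitVal X i + bitVal Y i := by
  simp only [bitVal, Nat.testBit_xor]
  cases X.testBit i <;> cases Y.testBit i <;> decide

lemma bitVal_two_pow_mul_add {t r : ℕ} (B : ℕ) (hr : r < 2 ^ t) (i : ℕ) :
    bitVal (2 ^ t * B + r) i = bitVal (2 ^ t * B) i + bitVal r i := by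
  by_cases hi : i < t
  · simp [bitVal, Nat.testBit_two_pow_mul_add B hr, Nat.testBit_two_pow_mul, hi]
  · have hr' : r < 2 ^ i := hr.trans_le (Nat.pow_le_pow_right two_pos (by omega))
    simp [bitVal, Nat.testBit_two_pow_mul_add B hr, Nat.testBit_two_pow_mul, hi,
      Nat.testBit_lt_two_pow hr', show t ≤ i by omega]

lemma bitDot_comm (k X v : ℕ) : bitDot k X v = bitDot k v X := by
  simp only [bitDot, mul_comm]

lemma bitDot_xor_left (k X Y v : ℕ) : bitDot k (X ^^^ Y) v = bitDot k X v + bitDot k Y v := by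
  simp only [bitDot, bitVal_xor, add_mul, sum_add_distrib]

lemma bitDot_two_pow_mul_add (k X : ℕ) {t r : ℕ} (B : ℕ) (hr : r < 2 ^ t) :
    bitDot k X (2 ^ t * B + r) = bitDot k X (2 ^ t * B) + bitDot k X r := by
  simp only [bitDot, bitVal_two_pow_mul_add B hr, mul_add, sum_add_distrib]

lemma bitDot_two_pow {k b : ℕ} (X : ℕ) (hb : b < k) : bitDot k X (2 ^ b) = bitVal X b := by
  rw [bitDot, sum_eq_single_of_mem b (mem_range.mpr hb)]
  · simp [bitVal, Nat.testBit_two_pow_self]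
  · intro i _ hib
    simp [bitVal, Nat.testBit_two_pow_of_ne (Ne.symm hib)]

lemma bitDot_eq_zero_of_lt {k t X v : ℕ} (hX : ∀ i < t, X.testBit i = false) (hv : v < 2 ^ t) :
    bitDot k X v = 0 := by
  refine sum_eq_zero fun i _ => ?_
  by_cases hi : i < t
  · simp [bitVal, hX i hi]
  · have hv' : v < 2 ^ i := hv.trans_le (Nat.pow_le_pow_right two_pos (by omega))
    simp [bitVal, Nat.testBit_lt_two_pow hv']

@[simp]
lemma bitDot_zero_left (k v : ℕ) : bitDot k 0 v = 0 := by simp [bitDot, bitVal]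

def IsLowestBit (X v : ℕ) : Prop := X.testBit v = true ∧ ∀ i < v, X.testBit i = false

lemma exists_isLowestBit {X : ℕ} (hX : X ≠ 0) : ∃ v, IsLowestBit X v := by
  classical
  have h := Nat.exists_testBit_of_ne_zero hX
  exact ⟨Nat.find h, Nat.find_spec h, fun i hi => by simpa using Nat.find_min h hi⟩

lemma IsLowestBit.lt {X v k : ℕ} (hv : IsLowestBit X v) (hX : X < 2 ^ k) : v < k :=
  (Nat.pow_lt_pow_iff_right one_lt_two).mp ((Nat.ge_two_pow_of_testBit hv.1).trans_lt hX)

lemma IsLowestBit.xor_two_pow {X v b : ℕ} (hv : IsLowestBit X v) (hvb : v < b) :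
    IsLowestBit (X ^^^ 2 ^ b) v := by
  have h : ∀ i ≤ v, (X ^^^ 2 ^ b).testBit i = X.testBit i := fun i hi => by
    rw [Nat.testBit_xor, Nat.testBit_two_pow_of_ne (by omega), Bool.xor_false]
  exact ⟨(h v le_rfl).trans hv.1, fun i hi => (h i hi.le).trans (hv.2 i hi)⟩

lemma IsLowestBit.forall_testBit_eq_false_iff {X v : ℕ} (hv : IsLowestBit X v) (t : ℕ) :
    (∀ i < t, X.testBit i = false) ↔ t ≤ v := by
  refine ⟨fun h => ?_, fun h i hi => hv.2 i (by omega)⟩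
  by_contra! hvt
  simpa [hv.1] using h v hvt

def oneCount (k X u : ℕ) : ℕ := Nat.count (fun s => bitDot k X s = 1) u

variable {k X v : ℕ}

lemma bitDot_two_pow_succ_mul_add (hvk : v < k) (hv : IsLowestBit X v) (B : ℕ) {r : ℕ}
    (hr : r < 2 ^ (v + 1)) :
    bitDot k X (2 ^ (v + 1) * B + r) =
      bitDot k X (2 ^ (v + 1) * B) + if 2 ^ v ≤ r then 1 else 0 := by
  rw [bitDot_two_pow_mul_add k X B hr]
  split_ifs with h
  · obtain ⟨r', rfl⟩ : ∃ r', r = 2 ^ v * 1 + r' := ⟨r - 2 ^ v, by omega⟩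
    have hr' : r' < 2 ^ v := by rw [pow_succ] at hr; omega
    rw [bitDot_two_pow_mul_add k X 1 hr', mul_one, bitDot_two_pow X hvk,
      bitDot_eq_zero_of_lt hv.2 hr']
    simp [bitVal, hv.1]
  · rw [bitDot_eq_zero_of_lt hv.2 (by omega : r < 2 ^ v)]

lemma count_bitDot_two_pow_succ_mul_add (hvk : v < k) (hv : IsLowestBit X v) (B : ℕ) {σ : ℕ}
    (hσ : σ ≤ 2 ^ (v + 1)) :
    Nat.count (fun r => bitDot k X (2 ^ (v + 1) * B + r) = 1) σ =
      if bitDot k X (2 ^ (v + 1) * B) = 1 then min σ (2 ^ v) else σ - min σ (2 ^ v) := by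
  obtain ⟨m, hm⟩ : ∃ m, σ = min σ (2 ^ v) + m := ⟨σ - min σ (2 ^ v), by omega⟩
  have hlow : Nat.count (fun r => bitDot k X (2 ^ (v + 1) * B + r) = 1) (min σ (2 ^ v)) =
      Nat.count (fun _ => bitDot k X (2 ^ (v + 1) * B) = 1) (min σ (2 ^ v)) :=
    Nat.count_congr fun r hr => by
      rw [bitDot_two_pow_succ_mul_add hvk hv B (by omega), if_neg (by omega), add_zero]
  have hhigh : Nat.count (fun r => bitDot k X (2 ^ (v + 1) * B + (min σ (2 ^ v) + r)) = 1) m =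
      Nat.count (fun _ => ¬bitDot k X (2 ^ (v + 1) * B) = 1) m :=
    Nat.count_congr fun r hr => by
      rw [bitDot_two_pow_succ_mul_add hvk hv B (by omega), if_pos (by omega)]
      generalize bitDot k X (2 ^ (v + 1) * B) = z
      revert z
      decide
  conv_lhs => rw [hm]
  rw [Nat.count_add, hlow, hhigh]
  by_cases hc : bitDot k X (2 ^ (v + 1) * B) = 1
  · simp [hc]
  · simp [hc]
    omega

lemma oneCount_two_pow_succ_mul (hvk : v < k) (hv : IsLowestBit X v) (W : ℕ) :
    oneCount k X (2 ^ (v + 1) * W) = 2 ^ v * W := by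
  induction W with
  | zero => simp [oneCount]
  | succ W ih =>
    rw [oneCount, mul_add, mul_one, Nat.count_add, ← oneCount, ih,
      count_bitDot_two_pow_succ_mul_add hvk hv W le_rfl, pow_succ, mul_add_one]
    split_ifs <;> omega

lemma oneCount_two_pow_succ_mul_add (hvk : v < k) (hv : IsLowestBit X v) (W : ℕ) {σ : ℕ}
    (hσ : σ ≤ 2 ^ (v + 1)) :
    oneCount k X (2 ^ (v + 1) * W + σ) = 2 ^ v * W +
      if bitDot k X (2 ^ (v + 1) * W) = 1 then min σ (2 ^ v) else σ - min σ (2 ^ v) := by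
  rw [oneCount, Nat.count_add, ← oneCount, oneCount_two_pow_succ_mul hvk hv,
    count_bitDot_two_pow_succ_mul_add hvk hv W hσ]

lemma oneCount_two_pow (hvk : v < k) (hv : IsLowestBit X v) {t : ℕ} (hvt : v < t) :
    oneCount k X (2 ^ t) = 2 ^ (t - 1) := by
  have h := oneCount_two_pow_succ_mul hvk hv (2 ^ (t - 1 - v))
  rwa [← pow_add, ← pow_add, show v + 1 + (t - 1 - v) = t by omega,
    show v + (t - 1 - v) = t - 1 by omega] at h

/-- Ones and zeros of `bitDot k X` balance on every aligned block of length `2 ^ (v + 1)`,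
so no prefix is unbalanced by more than `2 ^ v`. -/
lemma oneCount_balanced (hvk : v < k) (hv : IsLowestBit X v) (u : ℕ) :
    u ≤ 2 * oneCount k X u + 2 ^ v ∧ 2 * oneCount k X u ≤ u + 2 ^ v := by
  obtain ⟨q, r, hr, rfl⟩ : ∃ q r, r < 2 ^ (v + 1) ∧ u = 2 ^ (v + 1) * q + r :=
    ⟨u / 2 ^ (v + 1), u % 2 ^ (v + 1), Nat.mod_lt _ (Nat.two_pow_pos _), (Nat.div_add_mod _ _).symm⟩
  rw [oneCount_two_pow_succ_mul_add hvk hv q hr.le,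
    show 2 ^ (v + 1) * q = 2 * (2 ^ v * q) by ring]
  rw [pow_succ] at hr
  split_ifs <;> omega

lemma oneCount_eq_zero {t u : ℕ} (hX : ∀ i < t, X.testBit i = false) (hu : u ≤ 2 ^ t) :
    oneCount k X u = 0 :=
  Nat.count_of_forall_not fun s hs => by
    rw [bitDot_eq_zero_of_lt hX (by omega : s < 2 ^ t)]
    decide

end Bits

section Codewords

lemma colVal_two_pow_sub_add {k M r : ℕ} (hM : M < k) (hr : r < 2 ^ M) :
    colVal k (2 ^ k - 2 ^ (M + 1) + r) = 2 ^ M + r := by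
  have hMk : 2 ^ (M + 1) ≤ 2 ^ k := Nat.pow_le_pow_right two_pos hM
  rw [pow_succ] at hMk ⊢
  have hlog : Nat.log2 (2 ^ k - 1 - (2 ^ k - 2 ^ M * 2 + r)) = M := by
    rw [Nat.log2_eq_log_two]
    exact Nat.log_eq_of_pow_le_of_lt_pow (by omega) (by rw [pow_succ]; omega)
  rw [colVal, hlog]
  omega

/-- The first `2 ^ k - 2 ^ M` columns of `H_k` carry each of the values `2 ^ M, …, 2 ^ k - 1`
exactly once. -/
lemma count_colVal_add_count (P : ℕ → Prop) [DecidablePred P] {k M : ℕ} (hM : M ≤ k) :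
    Nat.count (fun j => P (colVal k j)) (2 ^ k - 2 ^ M) + Nat.count P (2 ^ M) =
      Nat.count P (2 ^ k) := by
  obtain ⟨d, rfl⟩ := Nat.exists_eq_add_of_le hM
  induction d generalizing M with
  | zero => simp
  | succ d ih =>
    have hpow : 2 ^ (M + 1) ≤ 2 ^ (M + (d + 1)) := Nat.pow_le_pow_right two_pos (by omega)
    have h := ih (M := M + 1) (by omega)
    rw [show M + 1 + d = M + (d + 1) by omega] at h
    have hsplit : 2 ^ (M + (d + 1)) - 2 ^ M = 2 ^ (M + (d + 1)) - 2 ^ (M + 1) + 2 ^ M := by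
      rw [pow_succ] at hpow ⊢; omega
    have hblock : Nat.count (fun r => P (colVal (M + (d + 1)) (2 ^ (M + (d + 1)) -
        2 ^ (M + 1) + r))) (2 ^ M) = Nat.count (fun r => P (2 ^ M + r)) (2 ^ M) :=
      Nat.count_congr fun r hr => by rw [colVal_two_pow_sub_add (by omega) hr]
    rw [hsplit, Nat.count_add, hblock, ← h, pow_succ, mul_two, Nat.count_add]
    omega

variable {k n : ℕ}

/-- The codeword `∑ᵢ xᵢ · (row i of H_k(n))`, where `x` is the binary expansion of `X`
read with row `1` as the most significant bit. -/
def codeword (k n X : ℕ) : Fin n → ZMod 2 := fun j => bitDot k X (colVal k j)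

lemma codeword_xor (X Y : ℕ) : codeword k n (X ^^^ Y) = codeword k n X + codeword k n Y :=
  funext fun _ => bitDot_xor_left _ _ _ _

@[simp]
lemma codeword_zero : codeword k n 0 = 0 :=
  funext fun _ => bitDot_zero_left _ _

lemma codeword_two_pow (i : Fin k) : codeword k n (2 ^ (k - 1 - i)) = Hrow k n (i + 1) := by
  funext j
  rw [codeword, bitDot_comm, bitDot_two_pow _ (by omega), Hrow, bitVal,
    show k - (i + 1) = k - 1 - i by omega]

lemma codeword_mem (X : ℕ) : codeword k n X ∈ SCode k n := by
  have hrow : ∀ i ∈ range k, Hrow k n (k - i) ∈ SCode k n := fun i hi => by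
    have hi : i < k := mem_range.mp hi
    refine Submodule.subset_span ⟨⟨k - 1 - i, by omega⟩, ?_⟩
    simp only
    rw [show k - 1 - i + 1 = k - i by omega]
  have hsum : codeword k n X = ∑ i ∈ range k, bitVal X i • Hrow k n (k - i) := by
    funext j
    simp only [codeword, bitDot, Finset.sum_apply, Pi.smul_apply, smul_eq_mul]
    refine sum_congr rfl fun i hi => ?_
    rw [Hrow, show k - (k - i) = i by have := mem_range.mp hi; omega]
    rfl
  rw [hsum]
  exact Submodule.sum_mem _ fun i hi => Submodule.smul_mem _ _ (hrow i hi)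

lemma exists_codeword_eq {c : Fin n → ZMod 2} (hc : c ∈ SCode k n) :
    ∃ X < 2 ^ k, codeword k n X = c := by
  induction hc using Submodule.span_induction with
  | mem x hx =>
    obtain ⟨i, rfl⟩ := hx
    exact ⟨2 ^ (k - 1 - i), Nat.pow_lt_pow_right one_lt_two (by omega), codeword_two_pow i⟩
  | zero => exact ⟨0, Nat.two_pow_pos k, codeword_zero⟩
  | add x y _ _ hx hy =>
    obtain ⟨X, hX, rfl⟩ := hx
    obtain ⟨Y, hY, rfl⟩ := hy
    exact ⟨X ^^^ Y, Nat.xor_lt_two_pow hX hY, codeword_xor X Y⟩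
  | smul a x _ hx =>
    obtain ⟨X, hX, rfl⟩ := hx
    obtain rfl | rfl : a = 0 ∨ a = 1 := by revert a; decide
    · exact ⟨0, Nat.two_pow_pos k, by rw [zero_smul, codeword_zero]⟩
    · exact ⟨X, hX, (one_smul _ _).symm⟩

lemma hammingNorm_codeword (X : ℕ) :
    hammingNorm (codeword k n X) = Nat.count (fun j => bitDot k X (colVal k j) = 1) n := by
  have hne : ∀ z : ZMod 2, z ≠ 0 ↔ z = 1 := by decide
  rw [hammingNorm, Nat.count_eq_card_filter_range, card_filter, card_filter]
  simp only [codeword, hne]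
  exact Fin.sum_univ_eq_sum_range (fun j => if bitDot k X (colVal k j) = 1 then 1 else 0) n

end Codewords

section Weights

variable {k N u : ℕ}

lemma hammingNorm_codeword_add_oneCount (hN : 1 ≤ N) (hNk : N ≤ k) (hu : u ≤ 2 ^ (N - 1))
    (X : ℕ) :
    hammingNorm (codeword k (2 ^ k - 2 ^ N + u) X) + oneCount k X (2 ^ N) =
      oneCount k X (2 ^ k) + if X.testBit (N - 1) then u - oneCount k X u else oneCount k X u := by
  have hN' : N - 1 + 1 = N := by omega
  have htail : ∀ s < u, bitDot k X (colVal k (2 ^ k - 2 ^ N + s)) =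
      bitVal X (N - 1) + bitDot k X s := fun s hs => by
    have hs : s < 2 ^ (N - 1) := by omega
    have h := colVal_two_pow_sub_add (k := k) (by omega) hs
    rw [hN'] at h
    rw [h, ← mul_one (2 ^ (N - 1)), bitDot_two_pow_mul_add k X 1 hs, mul_one,
      bitDot_two_pow X (by omega)]
  rw [hammingNorm_codeword, Nat.count_add, add_right_comm, oneCount, oneCount,
    count_colVal_add_count (fun s => bitDot k X s = 1) hNk, ← oneCount]
  congr 1
  by_cases hX : X.testBit (N - 1)
  · have h := Nat.count_add_count_not (fun s => bitDot k X s = 1) u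
    rw [← oneCount] at h
    rw [if_pos hX, show u - oneCount k X u = Nat.count (fun s => ¬bitDot k X s = 1) u by omega]
    exact Nat.count_congr fun s hs => by
      rw [htail s hs, bitVal, if_pos hX]
      generalize bitDot k X s = z
      revert z
      decide
  · rw [if_neg hX, oneCount]
    exact Nat.count_congr fun s hs => by simp [htail s hs, bitVal, hX]

lemma oneCount_two_pow_le {X : ℕ} (hX : X < 2 ^ k) (hX0 : X ≠ 0) (t : ℕ) :
    oneCount k X (2 ^ t) ≤ 2 ^ (t - 1) := by
  obtain ⟨v, hv⟩ := exists_isLowestBit hX0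
  rcases lt_or_ge v t with hvt | hvt
  · exact (oneCount_two_pow (hv.lt hX) hv hvt).le
  · rw [oneCount_eq_zero (fun i hi => hv.2 i (by omega)) le_rfl]
    exact Nat.zero_le _

lemma le_hammingNorm_codeword (hN : 1 ≤ N) (hNk : N ≤ k) (hu : u ≤ 2 ^ (N - 1))
    {X : ℕ} (hX : X < 2 ^ k) (hX0 : X ≠ 0) :
    2 ^ (k - 1) - 2 ^ (N - 1) ≤ hammingNorm (codeword k (2 ^ k - 2 ^ N + u) X) := by
  obtain ⟨v, hv⟩ := exists_isLowestBit hX0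
  have h := hammingNorm_codeword_add_oneCount hN hNk hu X
  rw [oneCount_two_pow (hv.lt hX) hv (hv.lt hX)] at h
  have := oneCount_two_pow_le hX hX0 N
  split_ifs at h <;> omega

/-- When the lowest set bit of `X` is at position `≥ N - 1`, the codeword has weight at least
half the length. -/
lemma hammingNorm_codeword_of_le (hN : 1 ≤ N) (hNk : N ≤ k) (hu : u ≤ 2 ^ (N - 1))
    {X v : ℕ} (hX : X < 2 ^ k) (hv : IsLowestBit X v) (hNv : N - 1 ≤ v) :
    2 ^ (k - 1) - 2 ^ (N - 1) + u ≤ hammingNorm (codeword k (2 ^ k - 2 ^ N + u) X) ∧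
      hammingNorm (codeword k (2 ^ k - 2 ^ N + u) X) ≤ 2 ^ (k - 1) := by
  have hvk := hv.lt hX
  have h := hammingNorm_codeword_add_oneCount hN hNk hu X
  rw [oneCount_two_pow hvk hv hvk,
    oneCount_eq_zero (fun i hi => hv.2 i (by omega) : ∀ i < N - 1, _) hu] at h
  have hNk' : 2 ^ (N - 1) ≤ 2 ^ (k - 1) := Nat.pow_le_pow_right two_pos (by omega)
  rcases hNv.eq_or_lt with rfl | hNv
  · rw [if_pos hv.1, oneCount_two_pow hvk hv (by omega)] at h
    omega
  · rw [if_neg (by simp [hv.2 _ hNv]), oneCount_eq_zero (fun i hi => hv.2 i (by omega)) le_rfl] at h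
    omega

/-- Flipping bit `N - 1` of `X` exchanges ones and zeros in the last `u` columns. -/
lemma hammingNorm_codeword_xor_two_pow (hN : 1 ≤ N) (hNk : N ≤ k) (hu : u ≤ 2 ^ (N - 1))
    {X v : ℕ} (hX : X < 2 ^ k) (hv : IsLowestBit X v) (hvN : v < N - 1) :
    hammingNorm (codeword k (2 ^ k - 2 ^ N + u) X) +
        hammingNorm (codeword k (2 ^ k - 2 ^ N + u) (X ^^^ 2 ^ (N - 1))) = 2 ^ k - 2 ^ N + u ∧
      hammingNorm (codeword k (2 ^ k - 2 ^ N + u) X) ≤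
        hammingNorm (codeword k (2 ^ k - 2 ^ N + u) (X ^^^ 2 ^ (N - 1))) + 2 ^ v ∧
      hammingNorm (codeword k (2 ^ k - 2 ^ N + u) (X ^^^ 2 ^ (N - 1))) ≤
        hammingNorm (codeword k (2 ^ k - 2 ^ N + u) X) + 2 ^ v := by
  have hvk := hv.lt hX
  have hv' := hv.xor_two_pow hvN
  have hcount : oneCount k (X ^^^ 2 ^ (N - 1)) u = oneCount k X u :=
    Nat.count_congr fun s hs => by
      rw [bitDot_xor_left, bitDot_eq_zero_of_lt (t := N - 1)
        (fun i hi => Nat.testBit_two_pow_of_ne (by omega)) (by omega), add_zero]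
  have h := hammingNorm_codeword_add_oneCount hN hNk hu X
  have h' := hammingNorm_codeword_add_oneCount hN hNk hu (X ^^^ 2 ^ (N - 1))
  rw [oneCount_two_pow hvk hv hvk, oneCount_two_pow hvk hv (by omega)] at h
  rw [oneCount_two_pow hvk hv' hvk, oneCount_two_pow hvk hv' (by omega), hcount,
    Nat.testBit_xor, Nat.testBit_two_pow_self] at h'
  have hbal := oneCount_balanced hvk hv u
  have hk : 2 ^ k = 2 * 2 ^ (k - 1) := by rw [← pow_succ']; congr 1; omega
  have hN2 : 2 ^ N = 2 * 2 ^ (N - 1) := by rw [← pow_succ']; congr 1; omega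
  have hNk' : 2 ^ (N - 1) ≤ 2 ^ (k - 1) := Nat.pow_le_pow_right two_pos (by omega)
  have hcu : oneCount k X u ≤ u := Nat.count_le _
  by_cases hb : X.testBit (N - 1)
  · rw [if_pos hb] at h
    rw [hb, if_neg (by decide)] at h'
    omega
  · rw [if_neg hb] at h
    rw [eq_false_of_ne_true hb, if_pos (by decide)] at h'
    omega

end Weights

lemma bijOn_codeword {k N u : ℕ} (hN : 1 ≤ N) (hNk : N < k) (hu : u ≤ 2 ^ (N - 1)) :
    Set.BijOn (codeword k (2 ^ k - 2 ^ N + u)) ↑(Ico 1 (2 ^ k))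
      {c | c ∈ SCode k (2 ^ k - 2 ^ N + u) ∧ c ≠ 0} := by
  have hne : ∀ X, X ≠ 0 → X < 2 ^ k → codeword k (2 ^ k - 2 ^ N + u) X ≠ 0 := fun X hX0 hX => by
    rw [← hammingNorm_pos_iff]
    have := le_hammingNorm_codeword hN hNk.le hu hX hX0
    have : 2 ^ (N - 1) < 2 ^ (k - 1) := Nat.pow_lt_pow_right one_lt_two (by omega)
    omega
  refine ⟨fun X hX => ?_, fun X hX Y hY hXY => ?_, fun c hc => ?_⟩
  · simp only [coe_Ico, Set.mem_Ico] at hX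
    exact ⟨codeword_mem X, hne X (by omega) hX.2⟩
  · simp only [coe_Ico, Set.mem_Ico] at hX hY
    by_contra hXY'
    refine hne (X ^^^ Y) (fun h => hXY' (Nat.eq_of_xor_eq_zero h)) (Nat.xor_lt_two_pow hX.2 hY.2) ?_
    rw [codeword_xor, hXY]
    exact funext fun _ => CharTwo.add_self_eq_zero _
  · obtain ⟨X, hX, rfl⟩ := exists_codeword_eq hc.1
    have hX0 : X ≠ 0 := by
      rintro rfl
      exact hc.2 codeword_zero
    exact ⟨X, by simp only [coe_Ico, Set.mem_Ico]; omega, rfl⟩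

def partner (N X : ℕ) : ℕ := if ∀ i < N - 1, X.testBit i = false then X else X ^^^ 2 ^ (N - 1)

lemma partner_eq_self {N X v : ℕ} (hv : IsLowestBit X v) (hNv : N - 1 ≤ v) : partner N X = X :=
  if_pos ((hv.forall_testBit_eq_false_iff _).mpr hNv)

lemma partner_eq_xor {N X v : ℕ} (hv : IsLowestBit X v) (hvN : v < N - 1) :
    partner N X = X ^^^ 2 ^ (N - 1) :=
  if_neg (by rw [hv.forall_testBit_eq_false_iff]; omega)

lemma partner_mem {k N X : ℕ} (hNk : N ≤ k) (hX : X ∈ Ico 1 (2 ^ k)) :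
    partner N X ∈ Ico 1 (2 ^ k) := by
  rw [mem_Ico] at hX ⊢
  obtain ⟨v, hv⟩ := exists_isLowestBit (show X ≠ 0 by omega)
  rcases le_or_gt (N - 1) v with hNv | hvN
  · rwa [partner_eq_self hv hNv]
  · rw [partner_eq_xor hv hvN]
    refine ⟨Nat.pos_of_ne_zero fun h => ?_, Nat.xor_lt_two_pow hX.2
      (Nat.pow_lt_pow_right one_lt_two (by omega))⟩
    simpa [h] using (hv.xor_two_pow hvN).1

lemma partner_partner {N X : ℕ} (hX : X ≠ 0) : partner N (partner N X) = X := by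
  obtain ⟨v, hv⟩ := exists_isLowestBit hX
  rcases le_or_gt (N - 1) v with hNv | hvN
  · rw [partner_eq_self hv hNv, partner_eq_self hv hNv]
  · rw [partner_eq_xor hv hvN, partner_eq_xor (hv.xor_two_pow hvN) hvN, Nat.xor_assoc,
      Nat.xor_self, Nat.xor_zero]

lemma weightTermDeriv_add_partner_nonneg {k N u n : ℕ} (hN : 1 ≤ N) (hNk : N < k)
    (h2N : 2 * N ≤ k + 3) (hu : u ≤ 2 ^ (N - 1)) (hn : n = 2 ^ k - 2 ^ N + u) {X : ℕ}
    (hX : X ∈ Ico 1 (2 ^ k)) {p : ℝ} (hp0 : 0 ≤ p) (hp : p ≤ 1 / 2) :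
    0 ≤ weightTermDeriv n (hammingNorm (codeword k n X)) p +
      weightTermDeriv n (hammingNorm (codeword k n (partner N X))) p := by
  subst hn
  rw [mem_Ico] at hX
  obtain ⟨v, hv⟩ := exists_isLowestBit (show X ≠ 0 by omega)
  have hk : 2 ^ k = 2 * 2 ^ (k - 1) := by rw [← pow_succ']; congr 1; omega
  have hN2 : 2 ^ N = 2 * 2 ^ (N - 1) := by rw [← pow_succ']; congr 1; omega
  have hNk' : 2 ^ N ≤ 2 ^ (k - 1) := Nat.pow_le_pow_right two_pos (by omega)
  have hN0 := Nat.two_pow_pos (N - 1)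
  rcases le_or_gt (N - 1) v with hNv | hvN
  · rw [partner_eq_self hv hNv, ← two_mul]
    obtain ⟨hlo, hhi⟩ := hammingNorm_codeword_of_le hN hNk.le hu hX.2 hv hNv
    exact mul_nonneg zero_le_two (weightTermDeriv_nonneg (by omega) (by omega) hp0 hp)
  · rw [partner_eq_xor hv hvN]
    obtain ⟨hsum, hle, hge⟩ := hammingNorm_codeword_xor_two_pow hN hNk.le hu hX.2 hv hvN
    have hlow := le_hammingNorm_codeword hN hNk.le hu hX.2 (by omega)
    have hvN' : 2 ^ v < 2 ^ (N - 1) := Nat.pow_lt_pow_right one_lt_two hvN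
    have hv2 : 2 ^ (v * 2) ≤ 2 ^ (k - 1) := Nat.pow_le_pow_right two_pos (by omega)
    rw [pow_mul] at hv2
    generalize hammingNorm (codeword k (2 ^ k - 2 ^ N + u) X) = w at *
    generalize hammingNorm (codeword k (2 ^ k - 2 ^ N + u) (X ^^^ 2 ^ (N - 1))) = w' at *
    refine weightTermDeriv_add_nonneg (by omega) (by omega) hsum ?_ hp0 hp
    have habs : |(w : ℤ) - w'| ≤ (2 ^ v : ℕ) := by
      rw [abs_le]
      omega
    calc _ ≤ ((2 ^ v : ℕ) : ℤ) ^ 2 := sq_le_sq' (abs_le.mp habs).1 (abs_le.mp habs).2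
      _ ≤ _ := by exact_mod_cast (by omega : (2 ^ v) ^ 2 ≤ 2 ^ k - 2 ^ N + u)

theorem isProper {k N n : ℕ} (hN : 1 ≤ N) (hNk : N < k) (h2N : 2 * N ≤ k + 3)
    (hn₁ : 2 ^ k - 2 ^ N ≤ n) (hn₂ : n ≤ 2 ^ k - 2 ^ (N - 1)) : IsProper (SCode k n) := by
  have hN2 : 2 ^ N = 2 * 2 ^ (N - 1) := by rw [← pow_succ']; congr 1; omega
  obtain ⟨u, rfl⟩ : ∃ u, n = 2 ^ k - 2 ^ N + u := ⟨n - (2 ^ k - 2 ^ N), by omega⟩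
  have hu : u ≤ 2 ^ (N - 1) := by omega
  rw [IsProper, funext (Pue_eq_sum_of_bijOn (bijOn_codeword hN hNk hu))]
  refine monotoneOn_sum_pow_mul_one_sub_pow _ _ _ fun p hp => ?_
  refine sum_nonneg_of_involution (partner N) (fun X hX => partner_mem hNk.le hX)
    (fun X hX => partner_partner (by rw [mem_Ico] at hX; omega)) fun X hX => ?_
  exact weightTermDeriv_add_partner_nonneg hN hNk h2N hu rfl hX hp.1.le hp.2.le

end SCode

/-- Here `m ≥ ⌈(k-3)/2⌉` is stated as `(k-3)/2 ≤ m` over `ℝ`, and `⌈(k-3)/2⌉` as `(k-2)/2` in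
`ℕ` (equal for `k ≥ 3`). -/
theorem stmt9 (k : ℕ) (hk : 4 ≤ k) :
    (∀ m : ℕ, 1 ≤ m → m ≤ k - 1 → ((k : ℝ) - 3) / 2 ≤ (m : ℝ) →
      ∀ n : ℕ, 2 ^ k - 2 ^ (k - m) ≤ n → n ≤ 2 ^ k - 2 ^ (k - m - 1) →
        IsProper (SCode k n)) ∧
    (∀ n : ℕ, 2 ^ k - 2 ^ (k - (k - 2) / 2) ≤ n → n ≤ 2 ^ k - 1 →
      IsProper (SCode k n)) := by
  refine ⟨fun m hm1 hmk hmk' n hn₁ hn₂ => ?_, fun n hn₁ hn₂ => ?_⟩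
  · have hkm : (k : ℝ) ≤ 2 * m + 3 := by linarith
    have hkm : k ≤ 2 * m + 3 := by exact_mod_cast hkm
    exact SCode.isProper (N := k - m) (by omega) (by omega) (by omega) hn₁ hn₂
  · have hL : 2 ^ (k - (k - 2) / 2) ≤ 2 ^ k := Nat.pow_le_pow_right two_pos (by omega)
    have hL0 := Nat.two_pow_pos (k - (k - 2) / 2)
    obtain ⟨N, hN, hNL, hr₁, hr₂⟩ :=
      exists_two_pow_pred_le_le (r := 2 ^ k - n) (L := k - (k - 2) / 2) (by omega) (by omega)
        (by omega)
    exact SCode.isProper hN (by omega) (by omega) (by omega) (by omega)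
end
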